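/- Let l and m be nonnegative integers. Then, as h → 0, the Obreshkov coefficients provide the (l, m) Padé-type approximation of the exponential: Σ_{i=0}^{m} (−1)^i · α_{i,l,m} · h^i · e^h − Σ_{i=0}^{l} α_{i,m,l} · h^i = O(h^{l+m+1}). -/

import Mathlib

/-! Let `P(h) = ∑ (-1)ⁱ α_{i,l,m} hⁱ` and `K = l + m + 1`. Replacing `e^h` by its Taylor
polynomial of degree `K - 1 - i` in the term of degree `i` changes `P(h) e^h` by `O(h^K)` only,
and leaves a polynomial of degree `< K` whose coefficient of `hⁿ` is
`∑ᵢ (-1)ⁱ α_{i,l,m} / (n-i)!`. Clearing factorials, this is `(l+m-n)!/(l+m)!` times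
`∑ᵢ (-1)ⁱ C(m,i) C(l+m-i, l+m-n)`, the `m`-th forward difference of `x ↦ C(x, l+m-n)` at `l`,
which is `C(l, n)`; so the coefficient is exactly `α_{n,m,l}`. -/

/-- The Obreshkov coefficient `α_{i,l,m} = ((m+l−i)! / (m+l)!) · binom(m, i)`. -/
noncomputable def obreshkovAlpha (i l m : ℕ) : ℝ :=
  (Nat.factorial (m + l - i) : ℝ) / (Nat.factorial (m + l)) * (Nat.choose m i)

open Finset Asymptotics Nat

lemma fwdDiff_iter_choose_eq_ite (m r : ℕ) :
    (fwdDiff 1)^[m] (fun x ↦ x.choose r : ℕ → ℤ)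
      = fun x ↦ if m ≤ r then (x.choose (r - m) : ℤ) else 0 := by
  by_cases hmr : m ≤ r
  · obtain ⟨j, rfl⟩ := Nat.exists_eq_add_of_le hmr
    simp [fwdDiff_iter_choose]
  · obtain ⟨j, rfl⟩ := Nat.exists_eq_add_of_lt (not_le.mp hmr)
    have hvanish : (fwdDiff 1)^[r + 1] (fun x ↦ x.choose r : ℕ → ℤ) = 0 := by
      have := fwdDiff_iter_choose 0 r
      rw [add_zero] at this
      rw [Function.iterate_succ_apply', this]
      simp only [choose_zero_right, cast_one, fwdDiff_const]
      rfl
    simp only [hmr, if_false]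
    rw [show r + j + 1 = j + (r + 1) by omega, Function.iterate_add_apply, hvanish]
    exact Function.iterate_fixed (fwdDiff_const 1 (0 : ℤ)) j

lemma sum_range_alternating_choose_mul_choose_sub {m N : ℕ} (hmN : m ≤ N) (r : ℕ) :
    ∑ k ∈ range (m + 1), (-1 : ℤ) ^ k * m.choose k * (N - k).choose r
      = if m ≤ r then ((N - m).choose (r - m) : ℤ) else 0 := by
  have := congrFun (fwdDiff_iter_choose_eq_ite m r) (N - m)
  rw [fwdDiff_iter_eq_sum_shift, ← sum_range_reflect] at this
  rw [← this]
  refine sum_congr rfl fun k hk ↦ ?_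
  have hk : k ≤ m := Nat.lt_succ_iff.mp (mem_range.mp hk)
  rw [add_tsub_cancel_right, Nat.sub_sub_self hk, choose_symm hk, smul_eq_mul, smul_eq_mul,
    mul_one, show N - m + (m - k) = N - k by omega]

lemma sum_range_alternating_choose_mul_choose_add_sub {l m n : ℕ} (hn : n ≤ l + m) :
    ∑ i ∈ range (n + 1), (-1 : ℤ) ^ i * m.choose i * (m + l - i).choose (m + l - n)
      = l.choose n := by
  set f : ℕ → ℤ := fun i ↦ (-1) ^ i * m.choose i * (m + l - i).choose (m + l - n)
  have hsum_n : ∑ i ∈ range (n + 1), f i = ∑ i ∈ range (m + l + 1), f i := by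
    refine (eventually_constant_sum (fun i hi ↦ ?_) (by omega)).symm
    rcases le_or_gt i (m + l) with hi' | hi'
    · simp [f, choose_eq_zero_of_lt (show m + l - i < m + l - n by omega)]
    · simp [f, choose_eq_zero_of_lt (show m < i by omega)]
  have hsum_m : ∑ i ∈ range (m + 1), f i = ∑ i ∈ range (m + l + 1), f i :=
    (eventually_constant_sum (fun i hi ↦ by simp [f, choose_eq_zero_of_lt hi]) (by omega)).symm
  rw [hsum_n, ← hsum_m, sum_range_alternating_choose_mul_choose_sub (by omega)]
  split_ifs with hm
  · rw [show m + l - m = l by omega, show m + l - n - m = l - n by omega,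
      choose_symm (by omega)]
  · rw [choose_eq_zero_of_lt (by omega), cast_zero]

lemma obreshkovAlpha_eq_zero_of_lt {i l m : ℕ} (h : m < i) : obreshkovAlpha i l m = 0 := by
  simp [obreshkovAlpha, choose_eq_zero_of_lt h]

lemma sum_range_obreshkovAlpha_div_factorial {l m n : ℕ} (hn : n ≤ l + m) :
    ∑ i ∈ range (n + 1), (-1 : ℝ) ^ i * obreshkovAlpha i l m / (n - i)! = obreshkovAlpha n m l := by
  have hterm : ∀ i ∈ range (n + 1), (-1 : ℝ) ^ i * obreshkovAlpha i l m / (n - i)!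
      = (m + l - n)! / (m + l)! *
          (((-1 : ℤ) ^ i * m.choose i * (m + l - i).choose (m + l - n) : ℤ) : ℝ) := by
    intro i hi
    have hin : i ≤ n := Nat.lt_succ_iff.mp (mem_range.mp hi)
    have hfac :
        ((m + l - i)! : ℝ) = (m + l - i).choose (m + l - n) * (m + l - n)! * (n - i)! := by
      have := choose_mul_factorial_mul_factorial (show m + l - n ≤ m + l - i by omega)
      rw [show m + l - i - (m + l - n) = n - i by omega] at this
      exact_mod_cast this.symm
    rw [obreshkovAlpha, hfac]
    push_cast
    field_simp
  rw [sum_congr rfl hterm, ← mul_sum, ← Int.cast_sum,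
    sum_range_alternating_choose_mul_choose_add_sub hn, obreshkovAlpha, add_comm l m]
  push_cast
  ring

lemma sum_mul_exp_sub_sum_isBigO_pow (c : ℕ → ℝ) (N : ℕ) :
    (fun h : ℝ ↦ (∑ i ∈ range N, c i * h ^ i) * Real.exp h
        - ∑ n ∈ range N, (∑ i ∈ range (n + 1), c i / (n - i)!) * h ^ n)
      =O[nhds 0] (· ^ N) := by
  have htrunc : ∀ h : ℝ, ∑ n ∈ range N, (∑ i ∈ range (n + 1), c i / (n - i)!) * h ^ n
      = ∑ i ∈ range N, c i * h ^ i * ∑ j ∈ range (N - i), h ^ j / j ! := by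
    intro h
    simp_rw [mul_sum, sum_mul]
    rw [← sum_range_diag_flip]
    refine sum_congr rfl fun n _ ↦ sum_congr rfl fun i hi ↦ ?_
    rw [← pow_mul_pow_sub h (Nat.lt_succ_iff.mp (mem_range.mp hi))]
    ring
  have hsplit : ∀ h : ℝ, (∑ i ∈ range N, c i * h ^ i) * Real.exp h
        - ∑ n ∈ range N, (∑ i ∈ range (n + 1), c i / (n - i)!) * h ^ n
      = ∑ i ∈ range N, c i * h ^ i * (Real.exp h - ∑ j ∈ range (N - i), h ^ j / j !) := by
    intro h
    simp_rw [htrunc, sum_mul, mul_sub, sum_sub_distrib]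
  simp_rw [hsplit]
  refine IsBigO.fun_sum fun i hi ↦ ?_
  have := ((isBigO_refl (fun h : ℝ ↦ h ^ i) _).mul
    (Real.exp_sub_sum_range_isBigO_pow (N - i))).const_mul_left (c i)
  simpa [← pow_add, Nat.add_sub_cancel' (mem_range.mp hi).le, mul_assoc] using this

/-- The Obreshkov coefficients give the `(l, m)` Padé-type approximation of the
exponential:
`Σ_{i=0}^{m} (−1)^i α_{i,l,m} hⁱ e^h − Σ_{i=0}^{l} α_{i,m,l} hⁱ = O(h^{l+m+1})`
as `h → 0`. -/
theorem obreshkov_pade_exponential (l m : ℕ) :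
    Asymptotics.IsBigO (nhds (0 : ℝ))
      (fun h : ℝ =>
        ∑ i ∈ Finset.range (m + 1),
          (-1 : ℝ) ^ i * obreshkovAlpha i l m * h ^ i * Real.exp h -
        ∑ i ∈ Finset.range (l + 1), obreshkovAlpha i m l * h ^ i)
      (fun h : ℝ => h ^ (l + m + 1)) := by
  set c : ℕ → ℝ := fun i ↦ (-1) ^ i * obreshkovAlpha i l m
  refine (sum_mul_exp_sub_sum_isBigO_pow c (l + m + 1)).congr_left fun h ↦ ?_
  have hP : ∑ i ∈ range (l + m + 1), c i * h ^ i = ∑ i ∈ range (m + 1), c i * h ^ i :=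
    eventually_constant_sum (fun i hi ↦ by simp [c, obreshkovAlpha_eq_zero_of_lt hi]) (by omega)
  have hQ : ∑ n ∈ range (l + m + 1), (∑ i ∈ range (n + 1), c i / (n - i)!) * h ^ n
      = ∑ n ∈ range (l + 1), obreshkovAlpha n m l * h ^ n := by
    rw [sum_congr rfl fun n hn ↦ by
      rw [sum_range_obreshkovAlpha_div_factorial (Nat.lt_succ_iff.mp (mem_range.mp hn))]]
    exact eventually_constant_sum (fun n hn ↦ by simp [obreshkovAlpha_eq_zero_of_lt hn]) (by omega)
  rw [hP, hQ, sum_mul]
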